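/- Let θ > 0 and b ∈ ℝ, and define Ψ(ξ) := (b/(6θ²))·ξ·(θξ² + 3)·exp(-θξ²/2). Then Ψ satisfies -Ψ''(ξ) + θ²ξ²·Ψ(ξ) - θ·Ψ(ξ) = b·ξ³·exp(-θξ²/2) for all ξ ∈ ℝ, and ∫_ℝ Ψ(ξ)·exp(-θξ²/2) dξ = 0 (Ψ is orthogonal in L²(ℝ) to the Gaussian ground state). -/

import Mathlib

open MeasureTheory Real

private lemma expDeriv (θ ξ : ℝ) :
    HasDerivAt (fun x : ℝ => Real.exp (-θ * x ^ 2 / 2)) (-θ * ξ * Real.exp (-θ * ξ ^ 2 / 2)) ξ := by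
  have h1 : HasDerivAt (fun x : ℝ => -θ * x ^ 2 / 2) (-θ * ξ) ξ := by
    have := ((hasDerivAt_pow 2 ξ).const_mul (-θ)).div_const 2
    refine this.congr_deriv ?_
    ring
  simpa [mul_comm] using h1.exp

private lemma psi1 (θ ξ c : ℝ) :
    HasDerivAt (fun x : ℝ => c * x * (θ * x ^ 2 + 3) * Real.exp (-θ * x ^ 2 / 2))
      (c * (3 - θ ^ 2 * ξ ^ 4) * Real.exp (-θ * ξ ^ 2 / 2)) ξ := by
  have hp : HasDerivAt (fun x : ℝ => c * x * (θ * x ^ 2 + 3))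
      (c * (θ * ξ ^ 2 + 3) + c * ξ * (θ * (2 * ξ))) ξ := by
    have h1 : HasDerivAt (fun x : ℝ => c * x) c ξ := by
      simpa using (hasDerivAt_id ξ).const_mul c
    have h2 : HasDerivAt (fun x : ℝ => θ * x ^ 2 + 3) (θ * (2 * ξ)) ξ := by
      have := ((hasDerivAt_pow 2 ξ).const_mul θ).add_const 3
      simpa using this
    exact h1.mul h2
  have := hp.mul (expDeriv θ ξ)
  refine this.congr_deriv ?_
  ring

private lemma psi2 (θ ξ c : ℝ) :
    HasDerivAt (fun x : ℝ => c * (3 - θ ^ 2 * x ^ 4) * Real.exp (-θ * x ^ 2 / 2))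
      (c * (θ ^ 3 * ξ ^ 5 - 4 * θ ^ 2 * ξ ^ 3 - 3 * θ * ξ) * Real.exp (-θ * ξ ^ 2 / 2)) ξ := by
  have hp : HasDerivAt (fun x : ℝ => c * (3 - θ ^ 2 * x ^ 4)) (-(c * (θ ^ 2 * (4 * ξ ^ 3)))) ξ := by
    have := (((hasDerivAt_pow 4 ξ).const_mul (θ ^ 2)).const_sub 3).const_mul c
    simpa using this
  have := hp.mul (expDeriv θ ξ)
  refine this.congr_deriv ?_
  ring

theorem first_corrector_solution
    (θ : ℝ) (hθ : 0 < θ) (b : ℝ)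
    (Ψ : ℝ → ℝ)
    (hΨ : Ψ = fun ξ => b / (6 * θ ^ 2) * ξ * (θ * ξ ^ 2 + 3) * Real.exp (-θ * ξ ^ 2 / 2)) :
    (∀ ξ : ℝ, -(deriv (deriv Ψ) ξ) + θ ^ 2 * ξ ^ 2 * Ψ ξ - θ * Ψ ξ
        = b * ξ ^ 3 * Real.exp (-θ * ξ ^ 2 / 2)) ∧
    ∫ ξ : ℝ, Ψ ξ * Real.exp (-θ * ξ ^ 2 / 2) = 0 := by
  set c := b / (6 * θ ^ 2) with hc
  have hd1 : deriv Ψ = fun ξ => c * (3 - θ ^ 2 * ξ ^ 4) * Real.exp (-θ * ξ ^ 2 / 2) := by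
    funext ξ
    rw [hΨ]
    exact (psi1 θ ξ c).deriv
  constructor
  · intro ξ
    have hd2 : deriv (deriv Ψ) ξ
        = c * (θ ^ 3 * ξ ^ 5 - 4 * θ ^ 2 * ξ ^ 3 - 3 * θ * ξ) * Real.exp (-θ * ξ ^ 2 / 2) := by
      rw [hd1]
      exact (psi2 θ ξ c).deriv
    rw [hd2, hΨ]
    have hb : c * (6 * θ ^ 2) = b := by
      rw [hc]; field_simp
    simp only
    linear_combination (ξ ^ 3 * Real.exp (-θ * ξ ^ 2 / 2)) * hb
  · have hodd : ∀ ξ : ℝ, Ψ (-ξ) * Real.exp (-θ * (-ξ) ^ 2 / 2)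
        = -(Ψ ξ * Real.exp (-θ * ξ ^ 2 / 2)) := by
      intro ξ; rw [hΨ]; simp only; ring_nf
    have h1 : ∫ ξ : ℝ, Ψ (-ξ) * Real.exp (-θ * (-ξ) ^ 2 / 2)
        = ∫ ξ : ℝ, Ψ ξ * Real.exp (-θ * ξ ^ 2 / 2) :=
      integral_neg_eq_self (fun ξ => Ψ ξ * Real.exp (-θ * ξ ^ 2 / 2)) _
    have h2 : ∫ ξ : ℝ, Ψ (-ξ) * Real.exp (-θ * (-ξ) ^ 2 / 2)
        = -∫ ξ : ℝ, Ψ ξ * Real.exp (-θ * ξ ^ 2 / 2) := by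
      simp_rw [hodd]
      exact integral_neg _
    linarith [h1, h2]
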